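/- arXiv:1707.02507 — 4 statements merged into one kernel-verified Lean document; each statement's English description precedes it below -/
import Mathlib

section
/- Let f : [0,1] → ℝ and let G be its graph G = {(t, f(t)) : t ∈ [0,1]} ⊆ ℝ². Suppose there exist a constant A > 0 and sequences a_i ∈ ℝ², R_i ∈ (0,1), and positive integers n_i with n_i → ∞, such that for every i the number of rectangles in the n_i × n_i grid partition of the square a_i + [0,R_i]² (i.e. the partition into n_i² congruent subsquares of side R_i/n_i) that intersect G is at least A·n_i². Then the Assouad dimension of G equals 2; equivalently, for every s < 2, G is not s-homogeneous: for every C > 0 there exist x ∈ G and 0 < r ≤ R such that the smallest number of sets of diameter at most r needed to cover B(x,R) ∩ G exceeds C·(R/r)^s. -/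
/-! Take a point `x` of `G` in one of the at least `A n²` squares of side `R/n` that `G` meets;
all of these squares lie in `B(x, 2R)`. A set of diameter at most `R/n` meets at most `5 × 5` of
them, so covering `B(x, 2R) ∩ G` by such sets takes at least `A n² / 25` sets, while
`s`-homogeneity allows only `C (2n)^s` of them, which is smaller once `n` is large since `s < 2`. -/

open MeasureTheory Metric Set Filter

/-- The smallest number of sets of diameter at most `r` needed to cover `E`
exceeds `m`: every finite cover of `E` by sets of diameter at most `r` has
cardinality strictly greater than `m`. -/
def smallestCoverExceeds {X : Type*} [PseudoMetricSpace X] (E : Set X) (r : ℝ) (m : ℝ) : Prop :=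
  ∀ 𝒰 : Finset (Set X), (∀ U ∈ 𝒰, EMetric.diam U ≤ ENNReal.ofReal r) →
    E ⊆ ⋃₀ (𝒰 : Set (Set X)) → m < (𝒰.card : ℝ)

/-- The rectangle of the `n × n` grid partition of the square `a + [0,R]²`
with grid indices `ij = (i, j)`. -/
def gridSquare (a : EuclideanSpace ℝ (Fin 2)) (R : ℝ) (n : ℕ) (ij : Fin n × Fin n) :
    Set (EuclideanSpace ℝ (Fin 2)) :=
  {p | (a 0 + (ij.1 : ℝ) * R / n ≤ p 0 ∧ p 0 ≤ a 0 + ((ij.1 : ℝ) + 1) * R / n) ∧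
       (a 1 + (ij.2 : ℝ) * R / n ≤ p 1 ∧ p 1 ≤ a 1 + ((ij.2 : ℝ) + 1) * R / n)}

def gridCell (c R : ℝ) (n i : ℕ) : Set ℝ := Icc (c + i * R / n) (c + (i + 1) * R / n)

section
variable {c R q q' : ℝ} {n i k : ℕ}

lemma gridCell_subset_Icc (hR : 0 ≤ R) (hi : i < n) : gridCell c R n i ⊆ Icc c (c + R) := by
  have hn : (0 : ℝ) < n := by exact_mod_cast (i.zero_le.trans_lt hi)
  have hi' : (i : ℝ) + 1 ≤ n := by exact_mod_cast hi
  have hlow : 0 ≤ i * R / n := by positivity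
  have hup : (i + 1) * R / n ≤ R := by rw [div_le_iff₀ hn]; nlinarith
  rintro q ⟨hq, hq'⟩
  constructor <;> linarith

lemma abs_sub_le_two_of_mem_gridCell (hR : 0 < R) (hn : 0 < n) (hq : q ∈ gridCell c R n i)
    (hq' : q' ∈ gridCell c R n k) (hqq' : |q - q'| ≤ R / n) : |(i : ℤ) - k| ≤ 2 := by
  have hu : 0 < R / n := by positivity
  simp only [gridCell, mul_div_assoc] at hq hq'
  obtain ⟨h1, h2⟩ := hq
  obtain ⟨h3, h4⟩ := hq'
  rw [abs_le] at hqq'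
  have : |(i : ℝ) - k| ≤ 2 := by
    rw [abs_le]; constructor <;> nlinarith
  exact_mod_cast this

end

lemma mem_gridSquare_iff {a : EuclideanSpace ℝ (Fin 2)} {R : ℝ} {n : ℕ} {ij : Fin n × Fin n}
    {p : EuclideanSpace ℝ (Fin 2)} :
    p ∈ gridSquare a R n ij ↔ p 0 ∈ gridCell (a 0) R n ij.1 ∧ p 1 ∈ gridCell (a 1) R n ij.2 :=
  Iff.rfl

lemma EuclideanSpace.dist_le_two_mul_of_abs_sub_le {x y : EuclideanSpace ℝ (Fin 2)} {c : ℝ}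
    (h0 : |x 0 - y 0| ≤ c) (h1 : |x 1 - y 1| ≤ c) : dist x y ≤ 2 * c := by
  have hc : 0 ≤ c := (abs_nonneg _).trans h0
  rw [EuclideanSpace.dist_eq, Fin.sum_univ_two, Real.dist_eq, Real.dist_eq,
    Real.sqrt_le_left (by positivity), sq_abs, sq_abs]
  nlinarith [abs_nonneg (x 0 - y 0), abs_nonneg (x 1 - y 1), sq_abs (x 0 - y 0), sq_abs (x 1 - y 1)]

section
variable {a x p q : EuclideanSpace ℝ (Fin 2)} {R : ℝ} {n : ℕ} {ij kl : Fin n × Fin n}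

lemma gridSquare_subset_closedBall (hR : 0 ≤ R) (hx : x ∈ gridSquare a R n kl) :
    gridSquare a R n ij ⊆ closedBall x (2 * R) := by
  intro p hp
  rw [mem_gridSquare_iff] at hp hx
  have hp0 := gridCell_subset_Icc hR ij.1.isLt hp.1
  have hp1 := gridCell_subset_Icc hR ij.2.isLt hp.2
  have hx0 := gridCell_subset_Icc hR kl.1.isLt hx.1
  have hx1 := gridCell_subset_Icc hR kl.2.isLt hx.2
  rw [mem_closedBall]
  apply EuclideanSpace.dist_le_two_mul_of_abs_sub_le <;> rw [abs_le] <;>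
    constructor <;> linarith [hp0.1, hp0.2, hp1.1, hp1.2, hx0.1, hx0.2, hx1.1, hx1.2]

lemma abs_sub_le_two_of_mem_gridSquare (hR : 0 < R) (hp : p ∈ gridSquare a R n ij)
    (hq : q ∈ gridSquare a R n kl) (hpq : dist p q ≤ R / n) :
    |(ij.1 : ℤ) - kl.1| ≤ 2 ∧ |(ij.2 : ℤ) - kl.2| ≤ 2 := by
  rw [mem_gridSquare_iff] at hp hq
  have hn : 0 < n := ij.1.pos
  exact ⟨abs_sub_le_two_of_mem_gridCell hR hn hp.1 hq.1 ((PiLp.dist_apply_le p q 0).trans hpq),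
    abs_sub_le_two_of_mem_gridCell hR hn hp.2 hq.2 ((PiLp.dist_apply_le p q 1).trans hpq)⟩

end

lemma ncard_le_twentyFive_of_abs_sub_le_two {n : ℕ} {s : Set (Fin n × Fin n)} (c : Fin n × Fin n)
    (hs : ∀ ij ∈ s, |(ij.1 : ℤ) - c.1| ≤ 2 ∧ |(ij.2 : ℤ) - c.2| ≤ 2) : s.ncard ≤ 25 := by
  let box : Finset (ℤ × ℤ) := Finset.Icc (-2) 2 ×ˢ Finset.Icc (-2) 2
  calc s.ncard ≤ (box : Set (ℤ × ℤ)).ncard := by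
        refine ncard_le_ncard_of_injOn (fun ij ↦ ((ij.1 : ℤ) - c.1, (ij.2 : ℤ) - c.2)) ?_ ?_
          box.finite_toSet
        · intro ij hij
          obtain ⟨h1, h2⟩ := hs ij hij
          rw [abs_le] at h1 h2
          simp only [box, Finset.coe_product, mem_prod, Finset.coe_Icc, mem_Icc]
          omega
        · intro ij _ kl _ h
          simp only [Prod.mk.injEq, sub_left_inj, Nat.cast_inj, Fin.val_inj] at h
          exact Prod.ext h.1 h.2
    _ = 25 := by rw [ncard_coe_finset]; rfl

lemma ncard_gridSquare_inter_nonempty_le_of_ediam_le {a : EuclideanSpace ℝ (Fin 2)} {R : ℝ}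
    {n : ℕ} (hR : 0 < R) {U : Set (EuclideanSpace ℝ (Fin 2))}
    (hU : ediam U ≤ ENNReal.ofReal (R / n)) :
    {ij | (gridSquare a R n ij ∩ U).Nonempty}.ncard ≤ 25 := by
  rcases eq_empty_or_nonempty {ij | (gridSquare a R n ij ∩ U).Nonempty} with h | ⟨kl, y, hy, hyU⟩
  · simp [h]
  refine ncard_le_twentyFive_of_abs_sub_le_two kl ?_
  rintro ij ⟨x, hx, hxU⟩
  have hxy : dist x y ≤ R / n := by
    rw [← ENNReal.ofReal_le_ofReal_iff (by positivity), ← edist_dist]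
    exact edist_le_of_ediam_le hxU hyU hU
  exact abs_sub_le_two_of_mem_gridSquare hR hx hy hxy

section
variable {a x : EuclideanSpace ℝ (Fin 2)} {R : ℝ} {n : ℕ} {G : Set (EuclideanSpace ℝ (Fin 2))}

lemma ncard_gridSquare_inter_nonempty_le_mul_card (hR : 0 < R)
    {𝒰 : Finset (Set (EuclideanSpace ℝ (Fin 2)))}
    (hdiam : ∀ U ∈ 𝒰, ediam U ≤ ENNReal.ofReal (R / n))
    (hcover : G ⊆ ⋃₀ (𝒰 : Set (Set (EuclideanSpace ℝ (Fin 2))))) :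
    {ij | (gridSquare a R n ij ∩ G).Nonempty}.ncard ≤ 25 * 𝒰.card := by
  have hsub : {ij | (gridSquare a R n ij ∩ G).Nonempty} ⊆
      ⋃ U ∈ 𝒰, {ij | (gridSquare a R n ij ∩ U).Nonempty} := by
    rintro ij ⟨p, hp, hpG⟩
    obtain ⟨U, hU, hpU⟩ := hcover hpG
    exact mem_biUnion hU ⟨p, hp, hpU⟩
  calc _ ≤ (⋃ U ∈ 𝒰, {ij | (gridSquare a R n ij ∩ U).Nonempty}).ncard := ncard_le_ncard hsub
    _ ≤ ∑ U ∈ 𝒰, {ij | (gridSquare a R n ij ∩ U).Nonempty}.ncard := 𝒰.set_ncard_biUnion_le _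
    _ ≤ ∑ _U ∈ 𝒰, 25 := Finset.sum_le_sum fun U hU ↦
        ncard_gridSquare_inter_nonempty_le_of_ediam_le hR (hdiam U hU)
    _ = 25 * 𝒰.card := by rw [Finset.sum_const, smul_eq_mul, mul_comm]

lemma smallestCoverExceeds_of_mem_gridSquare (hR : 0 < R) {kl : Fin n × Fin n}
    (hx : x ∈ gridSquare a R n kl) {m : ℝ}
    (hm : 25 * m < {ij | (gridSquare a R n ij ∩ G).Nonempty}.ncard) :
    smallestCoverExceeds (closedBall x (2 * R) ∩ G) (R / n) m := by
  intro 𝒰 hdiam hcover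
  have hlocal (ij : Fin n × Fin n) :
      gridSquare a R n ij ∩ (closedBall x (2 * R) ∩ G) = gridSquare a R n ij ∩ G := by
    rw [← inter_assoc, inter_eq_left.2 (gridSquare_subset_closedBall hR.le hx)]
  have hcount := ncard_gridSquare_inter_nonempty_le_mul_card (a := a) hR hdiam hcover
  simp only [hlocal] at hcount
  have hcount' : ({ij | (gridSquare a R n ij ∩ G).Nonempty}.ncard : ℝ) ≤ 25 * 𝒰.card := by
    exact_mod_cast hcount
  linarith

end

lemma eventually_rpow_lt_const_mul_rpow {s t c : ℝ} (hst : s < t) (hc : 0 < c) :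
    ∀ᶠ x : ℝ in atTop, x ^ s < c * x ^ t := by
  filter_upwards [(tendsto_rpow_neg_atTop (sub_pos.2 hst)).eventually (gt_mem_nhds hc),
    eventually_gt_atTop 0] with x hx hx0
  rw [neg_sub] at hx
  calc x ^ s = x ^ (s - t) * x ^ t := by rw [← Real.rpow_add hx0, sub_add_cancel]
    _ < c * x ^ t := mul_lt_mul_of_pos_right hx (Real.rpow_pos_of_pos hx0 t)

theorem assouad_of_grid_hitting_general (G : Set (EuclideanSpace ℝ (Fin 2)))
    (A : ℝ) (hA : 0 < A)
    (a : ℕ → EuclideanSpace ℝ (Fin 2)) (R : ℕ → ℝ) (n : ℕ → ℕ)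
    (hR : ∀ i, R i ∈ Ioo (0 : ℝ) 1)
    (hn : Tendsto n atTop atTop)
    (hcount : ∀ i, A * (n i : ℝ) ^ 2 ≤
      (({ij : Fin (n i) × Fin (n i) | (gridSquare (a i) (R i) (n i) ij ∩ G).Nonempty}.ncard : ℝ))) :
    ∀ s < (2 : ℝ), ∀ C > (0 : ℝ), ∃ x ∈ G, ∃ R' r : ℝ, 0 < r ∧ r ≤ R' ∧
      smallestCoverExceeds (closedBall x R' ∩ G) r (C * (R' / r) ^ s) := by
  intro s hs C hC
  have hN : Tendsto (fun i ↦ 2 * (n i : ℝ)) atTop atTop :=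
    (tendsto_natCast_atTop_atTop.comp hn).const_mul_atTop two_pos
  obtain ⟨i, hni, hi⟩ := ((hn.eventually_ge_atTop 1).and (hN.eventually
    (eventually_rpow_lt_const_mul_rpow hs (by positivity : 0 < A / (100 * C))))).exists
  have hRi : 0 < R i := (hR i).1
  have hni' : (1 : ℝ) ≤ n i := by exact_mod_cast hni
  obtain ⟨kl, x, hx, hxG⟩ : {ij | (gridSquare (a i) (R i) (n i) ij ∩ G).Nonempty}.Nonempty := by
    refine nonempty_of_ncard_ne_zero fun h ↦ ?_
    have := hcount i
    rw [h, Nat.cast_zero] at this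
    linarith [mul_pos hA (by positivity : (0 : ℝ) < n i ^ 2)]
  refine ⟨x, hxG, 2 * R i, R i / n i, by positivity, ?_,
    smallestCoverExceeds_of_mem_gridSquare hRi hx ?_⟩
  · linarith [div_le_self hRi.le hni']
  rw [show 2 * R i / (R i / n i) = 2 * n i by field_simp]
  calc 25 * (C * (2 * (n i : ℝ)) ^ s) < 25 * (C * (A / (100 * C) * (2 * n i) ^ (2 : ℝ))) :=
        mul_lt_mul_of_pos_left (mul_lt_mul_of_pos_left hi hC) (by norm_num)
    _ = A * n i ^ 2 := by rw [Real.rpow_two]; field_simp; norm_num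
    _ ≤ _ := hcount i

/-- If there are `A > 0` and sequences `aᵢ ∈ ℝ²`, `Rᵢ ∈ (0,1)`, `nᵢ → ∞` such that the graph
`G` of `f : [0,1] → ℝ` meets at least `A nᵢ²` rectangles of the `nᵢ × nᵢ` grid partition of the
square `aᵢ + [0,Rᵢ]²`, then `G` has Assouad dimension `2`: for every `s < 2`, `G` is not
`s`-homogeneous. -/
theorem assouad_of_grid_hitting (f : ℝ → ℝ) (G : Set (EuclideanSpace ℝ (Fin 2)))
    (hG : G = {p | ∃ t ∈ Icc (0 : ℝ) 1, p 0 = t ∧ p 1 = f t})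
    (A : ℝ) (hA : 0 < A)
    (a : ℕ → EuclideanSpace ℝ (Fin 2)) (R : ℕ → ℝ) (n : ℕ → ℕ)
    (hR : ∀ i, R i ∈ Ioo (0 : ℝ) 1) (hnpos : ∀ i, 0 < n i)
    (hn : Tendsto n atTop atTop)
    (hcount : ∀ i, A * (n i : ℝ) ^ 2 ≤
      (({ij : Fin (n i) × Fin (n i) | (gridSquare (a i) (R i) (n i) ij ∩ G).Nonempty}.ncard : ℝ))) :
    ∀ s < (2 : ℝ), ∀ C > (0 : ℝ), ∃ x ∈ G, ∃ R' r : ℝ, 0 < r ∧ r ≤ R' ∧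
      smallestCoverExceeds (closedBall x R' ∩ G) r (C * (R' / r) ^ s) :=
  assouad_of_grid_hitting_general G A hA a R n hR hn hcount
end

section
/- Let d ≥ 1 and let E ⊆ ℝ^d be a nonempty bounded set. Suppose there exist a constant A > 0 and sequences a_i ∈ ℝ^d, R_i ∈ (0,1), and positive integers n_i with n_i → ∞, such that for every i the number of cubes in the partition of the cube a_i + [0,R_i]^d into n_i^d congruent subcubes of side R_i/n_i that intersect E is at least A·n_i^d. Then the Assouad dimension of E equals d; equivalently, for every s < d and every C > 0 there exist x ∈ E and 0 < r ≤ R such that the smallest number of sets of diameter at most r needed to cover B(x,R) ∩ E exceeds C·(R/r)^s. -/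
open MeasureTheory Metric Set Filter

/-- The subcube of the partition of the cube `a + [0,R]^d` into `n^d` congruent subcubes of
side `R/n`, with grid indices `ι : Fin d → Fin n`. -/
def gridCube (d : ℕ) (a : EuclideanSpace ℝ (Fin d)) (R : ℝ) (n : ℕ) (ι : Fin d → Fin n) :
    Set (EuclideanSpace ℝ (Fin d)) :=
  {p | ∀ j : Fin d, a j + (ι j : ℝ) * R / n ≤ p j ∧ p j ≤ a j + ((ι j : ℝ) + 1) * R / n}

/-!
A set of diameter at most `R / n` meets at most `5 ^ d` cubes of the grid of side `R / n`. Hence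
covering `E` near the big cube `a + [0, R]^d` by sets of diameter `R / n` takes at least
`A n^d / 5^d` of them, while a ball of radius comparable to `R` only allows `C (R' / r)^s ≈ n^s`
of them, and `n^s = o(n^d)` for `s < d`.
-/

theorem EuclideanSpace.dist_le_sqrt_card_mul {ι : Type*} [Fintype ι]
    {x y : EuclideanSpace ℝ ι} {c : ℝ} (hc : 0 ≤ c) (h : ∀ j, dist (x j) (y j) ≤ c) :
    dist x y ≤ √(Fintype.card ι) * c := by
  rw [EuclideanSpace.dist_eq]
  calc √(∑ j, dist (x j) (y j) ^ 2) ≤ √(∑ _j : ι, c ^ 2) := by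
        gcongr with j; exact h j
    _ = √(Fintype.card ι) * c := by
        rw [Finset.sum_const, Finset.card_univ, nsmul_eq_mul, Real.sqrt_mul (by positivity),
          Real.sqrt_sq hc]

namespace gridCube

variable {d n : ℕ} {a : EuclideanSpace ℝ (Fin d)} {R : ℝ} {ι ι' : Fin d → Fin n}
  {p q : EuclideanSpace ℝ (Fin d)}

theorem apply_mem_Icc (hR : 0 ≤ R) (hp : p ∈ gridCube d a R n ι) (j : Fin d) :
    p j ∈ Icc (a j) (a j + R) := by
  have hn : (0 : ℝ) < n := by exact_mod_cast (ι j).pos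
  have hι : (ι j : ℝ) + 1 ≤ n := by exact_mod_cast (ι j).isLt
  obtain ⟨hlo, hhi⟩ := hp j
  constructor
  · have : 0 ≤ (ι j : ℝ) * R / n := by positivity
    linarith
  · have : ((ι j : ℝ) + 1) * R / n ≤ R := div_le_of_le_mul₀ hn.le hR (by nlinarith)
    linarith

theorem subset_closedBall (hR : 0 ≤ R) (hq : q ∈ gridCube d a R n ι') :
    gridCube d a R n ι ⊆ closedBall q (√d * R) := by
  intro p hp
  rw [mem_closedBall]
  refine (EuclideanSpace.dist_le_sqrt_card_mul hR fun j => ?_).trans_eq (by rw [Fintype.card_fin])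
  obtain ⟨hp₁, hp₂⟩ := apply_mem_Icc hR hp j
  obtain ⟨hq₁, hq₂⟩ := apply_mem_Icc hR hq j
  rw [Real.dist_eq, abs_le]
  constructor <;> linarith

theorem index_le_add_two (hR : 0 < R) (hp : p ∈ gridCube d a R n ι)
    (hq : q ∈ gridCube d a R n ι') (j : Fin d) (hpq : p j - q j ≤ R / n) :
    (ι j : ℕ) ≤ ι' j + 2 := by
  have hside : 0 < R / n := div_pos hR (by exact_mod_cast (ι j).pos)
  have hp₁ := (hp j).1
  have hq₂ := (hq j).2
  rw [mul_div_assoc] at hp₁ hq₂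
  have : ((ι j : ℝ) - ι' j - 2) * (R / n) ≤ 0 := by linarith
  have : (ι j : ℝ) ≤ ι' j + 2 := by linarith [nonpos_of_mul_nonpos_left this hside]
  exact_mod_cast this

/-- Measured from one cube that `U` meets, every other one is at most two steps away in each
coordinate. -/
theorem ncard_inter_nonempty_le (hR : 0 < R) {U : Set (EuclideanSpace ℝ (Fin d))}
    (hU : Metric.ediam U ≤ ENNReal.ofReal (R / n)) :
    {ι | (gridCube d a R n ι ∩ U).Nonempty}.ncard ≤ 5 ^ d := by
  rcases eq_empty_or_nonempty {ι | (gridCube d a R n ι ∩ U).Nonempty} with hS | ⟨ι₀, q, hq, hqU⟩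
  · simp [hS]
  have hnear : ∀ ι ∈ {ι | (gridCube d a R n ι ∩ U).Nonempty}, ∀ j,
      (ι j : ℤ) - ι₀ j ∈ Finset.Icc (-2 : ℤ) 2 := by
    rintro ι ⟨p, hp, hpU⟩ j
    have hdist : dist p q ≤ R / n := (edist_le_ofReal (by positivity)).1
      ((Metric.edist_le_ediam_of_mem hpU hqU).trans hU)
    have habs : |p j - q j| ≤ R / n := (PiLp.dist_apply_le p q j).trans hdist
    have h₁ := index_le_add_two hR hp hq j (le_of_abs_le habs)
    have h₂ := index_le_add_two hR hq hp j (by rw [abs_sub_comm] at habs; exact le_of_abs_le habs)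
    rw [Finset.mem_Icc]
    omega
  calc _ ≤ ((Fintype.piFinset fun _ : Fin d => Finset.Icc (-2 : ℤ) 2 : Finset _) :
        Set (Fin d → ℤ)).ncard := by
        refine ncard_le_ncard_of_injOn (fun ι j => (ι j : ℤ) - ι₀ j)
          (fun ι hι => Finset.mem_coe.2 (Fintype.mem_piFinset.2 (hnear ι hι))) ?_
          (Finset.finite_toSet _)
        intro ι _ ι' _ h
        funext j
        have := congrFun h j
        simp only [sub_left_inj, Nat.cast_inj] at this
        exact Fin.ext this
    _ = 5 ^ d := by rw [ncard_coe_finset, Fintype.card_piFinset]; simp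

theorem ncard_inter_nonempty_le_mul_card (hR : 0 < R) {E : Set (EuclideanSpace ℝ (Fin d))}
    (𝒰 : Finset (Set (EuclideanSpace ℝ (Fin d))))
    (hdiam : ∀ U ∈ 𝒰, Metric.ediam U ≤ ENNReal.ofReal (R / n))
    (hcover : ∀ ι, gridCube d a R n ι ∩ E ⊆ ⋃₀ (𝒰 : Set (Set _))) :
    {ι | (gridCube d a R n ι ∩ E).Nonempty}.ncard ≤ 5 ^ d * 𝒰.card := by
  have hsub : {ι | (gridCube d a R n ι ∩ E).Nonempty} ⊆
      ⋃ U ∈ 𝒰, {ι | (gridCube d a R n ι ∩ U).Nonempty} := by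
    rintro ι ⟨p, hpE⟩
    obtain ⟨U, hU, hpU⟩ := hcover ι hpE
    exact mem_biUnion hU ⟨p, hpE.1, hpU⟩
  calc _ ≤ (⋃ U ∈ 𝒰, {ι | (gridCube d a R n ι ∩ U).Nonempty}).ncard :=
        ncard_le_ncard hsub (toFinite _)
    _ ≤ ∑ U ∈ 𝒰, {ι | (gridCube d a R n ι ∩ U).Nonempty}.ncard := 𝒰.set_ncard_biUnion_le _
    _ ≤ 𝒰.card * 5 ^ d := Finset.sum_le_card_nsmul _ _ _ fun U hU =>
        ncard_inter_nonempty_le hR (hdiam U hU)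
    _ = 5 ^ d * 𝒰.card := mul_comm _ _

theorem smallestCoverExceeds_closedBall_inter (hR : 0 < R) {E : Set (EuclideanSpace ℝ (Fin d))}
    (hq : q ∈ gridCube d a R n ι') {R' : ℝ} (hR' : √d * R ≤ R') {m : ℝ}
    (hm : 5 ^ d * m < {ι | (gridCube d a R n ι ∩ E).Nonempty}.ncard) :
    smallestCoverExceeds (closedBall q R' ∩ E) (R / n) m := by
  intro 𝒰 hdiam hcover
  have hcount := ncard_inter_nonempty_le_mul_card hR 𝒰 hdiam fun ι p ⟨hp, hpE⟩ =>
    hcover ⟨closedBall_subset_closedBall hR' (subset_closedBall hR.le hq hp), hpE⟩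
  have : (5 : ℝ) ^ d * m < 5 ^ d * 𝒰.card := hm.trans_le (by exact_mod_cast hcount)
  exact lt_of_mul_lt_mul_left this (by positivity)

end gridCube

theorem exists_mul_rpow_lt_mul_pow {n : ℕ → ℕ} (hn : Tendsto n atTop atTop) {A : ℝ} (hA : 0 < A)
    {d : ℕ} {s : ℝ} (hs : s < d) (K : ℝ) :
    ∃ i, 0 < n i ∧ K * (n i : ℝ) ^ s < A * (n i : ℝ) ^ d := by
  have hgrowth : Tendsto (fun i => A * (n i : ℝ) ^ ((d : ℝ) - s)) atTop atTop :=
    ((tendsto_rpow_atTop (sub_pos.2 hs)).comp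
      (tendsto_natCast_atTop_atTop.comp hn)).const_mul_atTop hA
  obtain ⟨i, hi, hK⟩ := ((hn.eventually_gt_atTop 0).and (hgrowth.eventually_gt_atTop K)).exists
  refine ⟨i, hi, ?_⟩
  have hm : (0 : ℝ) < n i := by exact_mod_cast hi
  calc K * (n i : ℝ) ^ s < A * (n i : ℝ) ^ ((d : ℝ) - s) * (n i : ℝ) ^ s := by
        gcongr
    _ = A * (n i : ℝ) ^ d := by
        rw [mul_assoc, ← Real.rpow_add hm, sub_add_cancel, Real.rpow_natCast]

theorem assouad_of_grid_hitting_higher_general (d : ℕ)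
    (E : Set (EuclideanSpace ℝ (Fin d)))
    (A : ℝ) (hA : 0 < A)
    (a : ℕ → EuclideanSpace ℝ (Fin d)) (R : ℕ → ℝ) (n : ℕ → ℕ)
    (hR : ∀ i, R i ∈ Ioo (0 : ℝ) 1)
    (hn : Tendsto n atTop atTop)
    (hcount : ∀ i, A * (n i : ℝ) ^ d ≤
      (({ι : Fin d → Fin (n i) | (gridCube d (a i) (R i) (n i) ι ∩ E).Nonempty}.ncard : ℝ))) :
    ∀ s < (d : ℝ), ∀ C > (0 : ℝ), ∃ x ∈ E, ∃ R' r : ℝ, 0 < r ∧ r ≤ R' ∧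
      smallestCoverExceeds (closedBall x R' ∩ E) r (C * (R' / r) ^ s) := by
  intro s hs C hC
  -- Any radius `ρ R` with `ρ ≥ √d` swallows the big cube; the `+ 1` keeps `r ≤ R'` when `d = 0`.
  set ρ := √d + 1
  obtain ⟨i, hi, hbig⟩ := exists_mul_rpow_lt_mul_pow hn hA hs (5 ^ d * C * ρ ^ s)
  have hRi := (hR i).1
  have hm : (0 : ℝ) < n i := by exact_mod_cast hi
  have hratio : ρ * R i / (R i / n i) = ρ * n i := by field_simp
  have hlt : (5 : ℝ) ^ d * (C * (ρ * R i / (R i / n i)) ^ s) <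
      {ι | (gridCube d (a i) (R i) (n i) ι ∩ E).Nonempty}.ncard := by
    rw [hratio, Real.mul_rpow (by positivity) hm.le]
    linarith [hcount i]
  have hpos : (0 : ℝ) ≤ 5 ^ d * (C * (ρ * R i / (R i / n i)) ^ s) := by positivity
  obtain ⟨ι₀, p₀, hp₀, hp₀E⟩ : {ι | (gridCube d (a i) (R i) (n i) ι ∩ E).Nonempty}.Nonempty :=
    nonempty_of_ncard_ne_zero (Nat.cast_ne_zero.1 (hpos.trans_lt hlt).ne')
  refine ⟨p₀, hp₀E, ρ * R i, R i / n i, by positivity, ?_,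
    gridCube.smallestCoverExceeds_closedBall_inter hRi hp₀ (by gcongr; linarith) hlt⟩
  calc R i / n i ≤ R i := div_le_self hRi.le (by exact_mod_cast hi)
    _ ≤ ρ * R i := le_mul_of_one_le_left hRi.le (le_add_of_nonneg_left (Real.sqrt_nonneg _))

/-- If `E ⊆ ℝᵈ` is nonempty and bounded and there are `A > 0` and sequences `aᵢ ∈ ℝᵈ`,
`Rᵢ ∈ (0,1)`, `nᵢ → ∞` such that `E` meets at least `A nᵢᵈ` subcubes of the partition of the
cube `aᵢ + [0,Rᵢ]ᵈ` into `nᵢᵈ` congruent subcubes, then `E` has Assouad dimension `d`: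
for every `s < d`, `E` is not `s`-homogeneous. -/
theorem assouad_of_grid_hitting_higher (d : ℕ) (hd : 1 ≤ d)
    (E : Set (EuclideanSpace ℝ (Fin d))) (hEne : E.Nonempty) (hEb : Bornology.IsBounded E)
    (A : ℝ) (hA : 0 < A)
    (a : ℕ → EuclideanSpace ℝ (Fin d)) (R : ℕ → ℝ) (n : ℕ → ℕ)
    (hR : ∀ i, R i ∈ Ioo (0 : ℝ) 1) (hnpos : ∀ i, 0 < n i)
    (hn : Tendsto n atTop atTop)
    (hcount : ∀ i, A * (n i : ℝ) ^ d ≤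
      (({ι : Fin d → Fin (n i) | (gridCube d (a i) (R i) (n i) ι ∩ E).Nonempty}.ncard : ℝ))) :
    ∀ s < (d : ℝ), ∀ C > (0 : ℝ), ∃ x ∈ E, ∃ R' r : ℝ, 0 < r ∧ r ≤ R' ∧
      smallestCoverExceeds (closedBall x R' ∩ E) r (C * (R' / r) ^ s) :=
  assouad_of_grid_hitting_higher_general d E A hA a R n hR hn hcount
end

section
/- Let W = (W(t))_{t ≥ 0} be a standard Wiener process and let f : [0,1] → ℝ be continuously differentiable with f(t) ≥ 1 for all t ∈ [0,1]. Define the process B_f(t) = f(t)·W(t) − ∫₀ᵗ W(x)·f'(x) dx for t ∈ [0,1] (this equals the Itô stochastic integral ∫₀ᵗ f(x) W(dx) by integration by parts), and let G = {(t, B_f(t)) : t ∈ [0,1]} ⊆ ℝ² be its graph. Then almost surely the Assouad dimension of G equals 2; equivalently, almost surely, for every s < 2 and every C > 0 there exist x ∈ G and 0 < r ≤ R such that the smallest number of sets of diameter at most r needed to cover B(x,R) ∩ G exceeds C·(R/r)^s. -/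
open MeasureTheory ProbabilityTheory Metric Set Filter

/-- `W` is a standard Wiener process (Brownian motion) under `P`: `W 0 = 0` a.s.,
independent increments, `W (t+h) - W t` is normal with mean `0` and variance `h`,
and almost all sample paths are continuous. -/
def IsWienerProcess {Ω : Type*} [MeasurableSpace Ω] (P : Measure Ω) (W : ℝ → Ω → ℝ) : Prop :=
  (∀ᵐ ω ∂P, W 0 ω = 0) ∧
  (∀ (k : ℕ) (t : Fin (k + 1) → ℝ), 0 ≤ t 0 → StrictMono t →
    iIndepFun
      (fun j : Fin k => fun ω => W (t j.succ) ω - W (t j.castSucc) ω) P) ∧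
  (∀ t h : ℝ, 0 ≤ t → 0 ≤ h →
    Measure.map (fun ω => W (t + h) ω - W t ω) P = gaussianReal 0 h.toNNReal) ∧
  (∀ᵐ ω ∂P, Continuous fun t => W t ω)

/-!
Fix `K`. On a window `[a, a + 2Kτ]` of `2K` steps of length `τ`, ask the increments of `W`,
rescaled by `√τ`, to lie in prescribed unit intervals (`zigzagTarget`); this forces the path to
alternate `K` times between below `W a - √τ` and above `W a + √τ`. By Brownian scaling this has a
probability `q_K > 0` that does not depend on `τ`, so by independence, among `n` disjoint windows
of length `2Kτ ≍ 1/(Kn)` none zigzags with probability `(1 - q_K)^n`, and by Borel–Cantelli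
almost surely some window zigzags for all large `n`.
On such a window `B_f(t) - B_f(a) = f(t) (W t - W a) - ∫ₐᵗ (W - W a) f'`; since `f ≥ 1` and the
integral is at most `2Kτ` once the window is short, `B_f` crosses from below `B_f(a)` to above
`B_f(a) + Kτ` in each of `K` disjoint columns of width `τ`. The intermediate value theorem then
puts a `K × K` grid of `τ`-separated points of the graph into a ball of radius `3Kτ`, and covering
it by sets of diameter `τ/2` takes `K² > C (6K)^s` sets once `K` is large, whenever `s < 2`.
-/

theorem smallestCoverExceeds_of_pairwise_lt_dist {X ι : Type*} [PseudoMetricSpace X] [Fintype ι]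
    {E : Set X} {r m : ℝ} (hr : 0 ≤ r) (p : ι → X) (hp : ∀ i, p i ∈ E)
    (hsep : Pairwise fun i j ↦ r < dist (p i) (p j)) (hm : m < Fintype.card ι) :
    smallestCoverExceeds E r m := by
  intro 𝒰 hdiam hcover
  choose U hU hpU using fun i ↦ hcover (hp i)
  have hinj : Function.Injective fun i ↦ (⟨U i, hU i⟩ : 𝒰) := by
    intro i j hij
    by_contra hne
    have hUij : U i = U j := congrArg Subtype.val hij
    have hle : edist (p i) (p j) ≤ ENNReal.ofReal r :=
      (edist_le_ediam_of_mem (hpU i) (hUij ▸ hpU j)).trans (hdiam _ (hU i))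
    rw [edist_dist, ENNReal.ofReal_le_ofReal_iff hr] at hle
    exact (hsep hne).not_ge hle
  calc m < Fintype.card ι := hm
    _ ≤ Fintype.card 𝒰 := by exact_mod_cast Fintype.card_le_of_injective _ hinj
    _ = 𝒰.card := by simp

theorem eventually_mul_mul_rpow_lt_sq {c s : ℝ} (C : ℝ) (hc : 0 ≤ c) (hs : s < 2) :
    ∀ᶠ K : ℕ in atTop, C * (c * K) ^ s < (K : ℝ) ^ 2 := by
  have hlarge : ∀ᶠ x : ℝ in atTop, C * c ^ s < x ^ (2 - s) :=
    (tendsto_rpow_atTop (by linarith)).eventually_gt_atTop _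
  filter_upwards [tendsto_natCast_atTop_atTop.eventually hlarge,
    tendsto_natCast_atTop_atTop.eventually_gt_atTop (0 : ℝ)] with K hK hK0
  have hsplit : (K : ℝ) ^ 2 = K ^ s * K ^ (2 - s) := by
    rw [← Real.rpow_add hK0, add_sub_cancel, Real.rpow_two]
  rw [Real.mul_rpow hc hK0.le, hsplit, ← mul_assoc, mul_comm (K ^ s : ℝ)]
  exact mul_lt_mul_of_pos_right hK (Real.rpow_pos_of_pos hK0 s)

namespace EuclideanSpace

theorem dist_pair_le_abs_add_abs (x y x' y' : ℝ) :
    dist !₂[x, y] !₂[x', y'] ≤ |x - x'| + |y - y'| := by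
  rw [EuclideanSpace.dist_eq, Fin.sum_univ_two]
  refine Real.sqrt_le_iff.mpr ⟨by positivity, ?_⟩
  simp only [Matrix.cons_val_zero, Matrix.cons_val_one, Real.dist_eq]
  nlinarith [abs_nonneg (x - x'), abs_nonneg (y - y'), sq_abs (x - x'), sq_abs (y - y')]

theorem abs_sub_fst_le_dist_pair (x y x' y' : ℝ) : |x - x'| ≤ dist !₂[x, y] !₂[x', y'] := by
  simpa [Real.dist_eq] using PiLp.dist_apply_le !₂[x, y] !₂[x', y'] 0

theorem abs_sub_snd_le_dist_pair (x y x' y' : ℝ) : |y - y'| ≤ dist !₂[x, y] !₂[x', y'] := by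
  simpa [Real.dist_eq] using PiLp.dist_apply_le !₂[x, y] !₂[x', y'] 1

end EuclideanSpace

section Grid

variable {β : ℝ → ℝ} {a τ : ℝ} {K : ℕ}

theorem exists_grid_of_crossings (hτ : 0 ≤ τ) (hβ : ContinuousOn β (Icc a (a + 2 * K * τ)))
    (hdown : ∀ j < K, β (a + (2 * j + 1) * τ) ≤ β a)
    (hup : ∀ j < K, β a + K * τ ≤ β (a + (2 * j + 2) * τ)) :
    ∃ t : Fin K × Fin K → ℝ, ∀ q, t q ∈ Icc (a + (2 * q.1 + 1) * τ) (a + (2 * q.1 + 2) * τ) ∧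
      β (t q) = β a + q.2 * τ := by
  suffices ∀ q : Fin K × Fin K, ∃ t ∈ Icc (a + (2 * q.1 + 1) * τ) (a + (2 * q.1 + 2) * τ),
      β t = β a + q.2 * τ by
    choose t ht hβt using this
    exact ⟨t, fun q ↦ ⟨ht q, hβt q⟩⟩
  rintro ⟨j, i⟩
  have hj : (j : ℝ) + 1 ≤ K := by exact_mod_cast j.isLt
  have hi : (i : ℝ) + 1 ≤ K := by exact_mod_cast i.isLt
  have hsub : Icc (a + (2 * j + 1) * τ) (a + (2 * j + 2) * τ) ⊆ Icc a (a + 2 * K * τ) :=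
    Icc_subset_Icc (by nlinarith) (by nlinarith)
  refine intermediate_value_Icc (by nlinarith) (hβ.mono hsub) ⟨?_, ?_⟩
  · nlinarith [hdown j j.isLt]
  · nlinarith [hup j j.isLt]

theorem pairwise_le_dist_of_grid (hτ : 0 ≤ τ) (t : Fin K × Fin K → ℝ)
    (ht : ∀ q, t q ∈ Icc (a + (2 * q.1 + 1) * τ) (a + (2 * q.1 + 2) * τ))
    (hβt : ∀ q, β (t q) = β a + q.2 * τ) :
    Pairwise fun q q' ↦ τ ≤ dist !₂[t q, β (t q)] !₂[t q', β (t q')] := by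
  have hcolumns : ∀ q q' : Fin K × Fin K, q.1 < q'.1 →
      τ ≤ dist !₂[t q, β (t q)] !₂[t q', β (t q')] := by
    intro q q' h
    have : (q.1 : ℝ) + 1 ≤ q'.1 := by exact_mod_cast h
    refine le_trans ?_ (EuclideanSpace.abs_sub_fst_le_dist_pair _ _ _ _)
    rw [abs_sub_comm]
    exact le_abs.mpr (Or.inl (by nlinarith [(ht q).2, (ht q').1]))
  rintro ⟨j, i⟩ ⟨j', i'⟩ hne
  rcases lt_trichotomy j j' with h | rfl | h
  · exact hcolumns _ _ h
  · have hii : i ≠ i' := fun h ↦ hne (by rw [h])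
    refine le_trans ?_ (EuclideanSpace.abs_sub_snd_le_dist_pair _ _ _ _)
    rw [hβt, hβt, add_sub_add_left_eq_sub, ← sub_mul, abs_mul, abs_of_nonneg hτ]
    have : (1 : ℝ) ≤ |(i : ℝ) - i'| := by
      rcases lt_or_gt_of_ne hii with h | h
      · have : (i : ℝ) + 1 ≤ i' := by exact_mod_cast h
        exact le_abs.mpr (Or.inr (by linarith))
      · have : (i' : ℝ) + 1 ≤ i := by exact_mod_cast h
        exact le_abs.mpr (Or.inl (by linarith))
    nlinarith
  · rw [dist_comm]
    exact hcolumns _ _ h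

end Grid

noncomputable def byPartsIntegral (f f' g : ℝ → ℝ) (t : ℝ) : ℝ :=
  f t * g t - ∫ x in (0 : ℝ)..t, g x * f' x

section ByParts

variable {f f' : ℝ → ℝ}
  (hderiv : ∀ x ∈ Icc (0 : ℝ) 1, HasDerivWithinAt f (f' x) (Icc (0 : ℝ) 1) x)
  (hf'cont : ContinuousOn f' (Icc (0 : ℝ) 1))
include hderiv hf'cont

theorem integral_eq_sub_of_hasDerivWithinAt_unitInterval {a t : ℝ} (ha : 0 ≤ a) (hat : a ≤ t)
    (ht : t ≤ 1) : ∫ x in a..t, f' x = f t - f a := by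
  have hsub : Icc a t ⊆ Icc 0 1 := Icc_subset_Icc ha ht
  refine intervalIntegral.integral_eq_sub_of_hasDerivAt_of_le hat
    (fun x hx ↦ (hderiv x (hsub hx)).continuousWithinAt.mono hsub) (fun x hx ↦ ?_)
    ((hf'cont.mono hsub).intervalIntegrable_of_Icc hat)
  exact (hderiv x (hsub (Ioo_subset_Icc_self hx))).hasDerivAt
    (Icc_mem_nhds (ha.trans_lt hx.1) (hx.2.trans_le ht))

theorem byPartsIntegral_sub {g : ℝ → ℝ} (hg : Continuous g) {a t : ℝ} (ha : 0 ≤ a) (hat : a ≤ t)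
    (ht : t ≤ 1) :
    byPartsIntegral f f' g t - byPartsIntegral f f' g a
      = f t * (g t - g a) - ∫ x in a..t, (g x - g a) * f' x := by
  have hint : ∀ {u v}, u ∈ Icc (0 : ℝ) 1 → v ∈ Icc (0 : ℝ) 1 → ∀ {φ : ℝ → ℝ}, Continuous φ →
      IntervalIntegrable (fun x ↦ φ x * f' x) volume u v := fun hu hv _ hφ ↦
    (hφ.continuousOn.mul hf'cont).mono (uIcc_subset_Icc hu hv) |>.intervalIntegrable
  have h0 : (0 : ℝ) ∈ Icc (0 : ℝ) 1 := left_mem_Icc.mpr zero_le_one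
  have ha' : a ∈ Icc (0 : ℝ) 1 := ⟨ha, hat.trans ht⟩
  have ht' : t ∈ Icc (0 : ℝ) 1 := ⟨ha.trans hat, ht⟩
  have hsplit : ∫ x in a..t, g x * f' x
      = (∫ x in a..t, (g x - g a) * f' x) + g a * (f t - f a) := by
    simp_rw [sub_mul]
    rw [intervalIntegral.integral_sub (hint ha' ht' hg) (hint ha' ht' continuous_const),
      intervalIntegral.integral_const_mul,
      integral_eq_sub_of_hasDerivWithinAt_unitInterval hderiv hf'cont ha hat ht]
    ring
  rw [← intervalIntegral.integral_interval_sub_left (hint h0 ht' hg) (hint h0 ha' hg)] at hsplit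
  rw [byPartsIntegral, byPartsIntegral]
  linear_combination -hsplit

theorem continuousOn_byPartsIntegral {g : ℝ → ℝ} (hg : Continuous g) :
    ContinuousOn (byPartsIntegral f f' g) (Icc 0 1) := by
  have hf : ContinuousOn f (Icc 0 1) := fun x hx ↦ (hderiv x hx).continuousWithinAt
  have hprimitive : ContinuousOn (fun t ↦ ∫ x in (0 : ℝ)..t, g x * f' x) (Icc 0 1) := by
    rw [← uIcc_of_le zero_le_one]
    refine intervalIntegral.continuousOn_primitive_interval ?_
    rw [uIcc_of_le zero_le_one]
    exact ContinuousOn.integrableOn_Icc (by fun_prop)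
  exact (hf.mul hg.continuousOn).sub hprimitive

theorem abs_byPartsIntegral_sub_sub_le {M : ℝ} (hM : ∀ x ∈ Icc (0 : ℝ) 1, ‖f' x‖ ≤ M)
    {g : ℝ → ℝ} (hg : Continuous g) {a t ε : ℝ} (ha : 0 ≤ a) (hat : a ≤ t) (ht : t ≤ 1)
    (hosc : ∀ x ∈ Icc a t, |g x - g a| ≤ ε) :
    |byPartsIntegral f f' g t - byPartsIntegral f f' g a - f t * (g t - g a)|
      ≤ ε * M * (t - a) := by
  rw [byPartsIntegral_sub hderiv hf'cont hg ha hat ht, sub_sub_cancel_left, abs_neg]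
  have hbound : ∀ x ∈ uIoc a t, ‖(g x - g a) * f' x‖ ≤ ε * M := by
    intro x hx
    rw [uIoc_of_le hat] at hx
    rw [norm_mul, Real.norm_eq_abs]
    exact mul_le_mul (hosc x (Ioc_subset_Icc_self hx)) (hM x ⟨ha.trans hx.1.le, hx.2.trans ht⟩)
      (norm_nonneg _) ((abs_nonneg _).trans (hosc x (Ioc_subset_Icc_self hx)))
  simpa [abs_of_nonneg (sub_nonneg.mpr hat)] using
    intervalIntegral.norm_integral_le_of_norm_le_const hbound

end ByParts

/-- Consecutive targets `2j, 2j + 1` add up to a number in `[1, 3]`, so the partial sums of a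
sequence hitting them stay in `[j, 3j]` after `2j` terms, while the next (negative) target is
large enough to push them below `-1`. -/
def zigzagTarget (k : ℕ) : Set ℝ :=
  if Even k then Icc (-(2 * k + 2)) (-(2 * k + 1)) else Icc (2 * k + 1) (2 * k + 2)

theorem measurableSet_zigzagTarget (k : ℕ) : MeasurableSet (zigzagTarget k) := by
  unfold zigzagTarget
  split_ifs <;> exact measurableSet_Icc

theorem gaussianReal_zigzagTarget_pos (k : ℕ) : 0 < gaussianReal 0 1 (zigzagTarget k) := by
  refine pos_iff_ne_zero.mpr fun h ↦ ?_
  have hvol := gaussianReal_absolutelyContinuous' 0 one_ne_zero h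
  unfold zigzagTarget at hvol
  split_ifs at hvol <;> simp [Real.volume_Icc] at hvol

theorem sum_range_zigzag_bounds {x : ℕ → ℝ} {K : ℕ} (hx : ∀ k < 2 * K, x k ∈ zigzagTarget k)
    {j : ℕ} (hj : j < K) :
    ∑ k ∈ Finset.range (2 * j + 1), x k ≤ -1 ∧ 1 ≤ ∑ k ∈ Finset.range (2 * j + 2), x k := by
  have heven : ∀ i < K, x (2 * i) ∈ Icc (-(4 * i + 2) : ℝ) (-(4 * i + 1)) := by
    intro i hi
    have h := hx (2 * i) (by omega)
    rw [zigzagTarget, if_pos (even_two_mul i)] at h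
    convert h using 2 <;> push_cast <;> ring
  have hodd : ∀ i < K, x (2 * i + 1) ∈ Icc (4 * i + 3 : ℝ) (4 * i + 4) := by
    intro i hi
    have h := hx (2 * i + 1) (by omega)
    rw [zigzagTarget, if_neg (Nat.not_even_two_mul_add_one i)] at h
    convert h using 2 <;> push_cast <;> ring
  have hpairs : ∀ i ≤ K, i ≤ ∑ k ∈ Finset.range (2 * i), x k ∧
      ∑ k ∈ Finset.range (2 * i), x k ≤ 3 * i := by
    intro i hi
    induction i with
    | zero => simp
    | succ i ih =>
      obtain ⟨ih₁, ih₂⟩ := ih (by omega)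
      rw [show 2 * (i + 1) = 2 * i + 1 + 1 by ring, Finset.sum_range_succ, Finset.sum_range_succ]
      obtain ⟨he₁, he₂⟩ := heven i (by omega)
      obtain ⟨ho₁, ho₂⟩ := hodd i (by omega)
      push_cast
      constructor <;> linarith
  obtain ⟨h₁, h₂⟩ := hpairs j hj.le
  rw [Finset.sum_range_succ, show 2 * j + 2 = 2 * j + 1 + 1 by ring, Finset.sum_range_succ,
    Finset.sum_range_succ]
  obtain ⟨he₁, he₂⟩ := heven j hj
  obtain ⟨ho₁, ho₂⟩ := hodd j hj
  constructor <;> linarith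

def IsZigzagWindow (g : ℝ → ℝ) (K : ℕ) (τ a : ℝ) : Prop :=
  ∀ k < 2 * K, (g (a + k * τ + τ) - g (a + k * τ)) / √τ ∈ zigzagTarget k

theorem IsZigzagWindow.excursions {g : ℝ → ℝ} {K : ℕ} {τ a : ℝ} (h : IsZigzagWindow g K τ a)
    (hτ : 0 < τ) {j : ℕ} (hj : j < K) :
    g (a + (2 * j + 1) * τ) - g a ≤ -√τ ∧ √τ ≤ g (a + (2 * j + 2) * τ) - g a := by
  have hsqrt : 0 < √τ := Real.sqrt_pos.mpr hτ
  have htel : ∀ m : ℕ, g (a + m * τ) - g a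
      = √τ * ∑ k ∈ Finset.range m, (g (a + k * τ + τ) - g (a + k * τ)) / √τ := by
    intro m
    simp_rw [Finset.mul_sum, mul_div_cancel₀ _ hsqrt.ne']
    simpa [add_one_mul, add_assoc] using (Finset.sum_range_sub (fun k : ℕ ↦ g (a + k * τ)) m).symm
  obtain ⟨hdown, hup⟩ := sum_range_zigzag_bounds h hj
  constructor
  · have := htel (2 * j + 1)
    push_cast at this
    rw [this]
    nlinarith
  · have := htel (2 * j + 2)
    push_cast at this
    rw [this]
    nlinarith

section ZigzagWindow

variable {f f' : ℝ → ℝ}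
  (hderiv : ∀ x ∈ Icc (0 : ℝ) 1, HasDerivWithinAt f (f' x) (Icc (0 : ℝ) 1) x)
  (hf'cont : ContinuousOn f' (Icc (0 : ℝ) 1)) (hf1 : ∀ x ∈ Icc (0 : ℝ) 1, 1 ≤ f x)
  {M ε : ℝ} (hM : ∀ x ∈ Icc (0 : ℝ) 1, ‖f' x‖ ≤ M) (hεM : ε * M ≤ 1)
  {g : ℝ → ℝ} (hg : Continuous g) {δ : ℝ}
  (hunif : ∀ x ∈ Icc (0 : ℝ) 1, ∀ y ∈ Icc (0 : ℝ) 1, dist x y ≤ δ → dist (g x) (g y) ≤ ε)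
  {K : ℕ} {τ a : ℝ} (hτ : 0 < τ) (ha : 0 ≤ a) (hfit : a + 2 * K * τ ≤ 1)
  (hscale : 9 * K ^ 2 * τ ≤ 1) (hδ : 2 * K * τ ≤ δ) (hzig : IsZigzagWindow g K τ a)
include hderiv hf'cont hf1 hM hεM hg hunif hτ ha hfit hscale hδ hzig

theorem crossings_of_isZigzagWindow :
    (∀ j < K, byPartsIntegral f f' g (a + (2 * j + 1) * τ) ≤ byPartsIntegral f f' g a) ∧
      ∀ j < K, byPartsIntegral f f' g a + K * τ ≤ byPartsIntegral f f' g (a + (2 * j + 2) * τ) := by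
  set β := byPartsIntegral f f' g
  have hsqrt : 3 * K * τ ≤ √τ := Real.le_sqrt_of_sq_le (by nlinarith)
  have herr : ∀ t ∈ Icc a (a + 2 * K * τ), |β t - β a - f t * (g t - g a)| ≤ 2 * K * τ := by
    intro t ht
    have hosc : ∀ x ∈ Icc a t, |g x - g a| ≤ ε := fun x hx ↦ by
      rw [← Real.dist_eq]
      exact hunif x ⟨ha.trans hx.1, hx.2.trans (ht.2.trans hfit)⟩ a ⟨ha, by nlinarith⟩
        (by rw [Real.dist_eq, abs_of_nonneg (sub_nonneg.mpr hx.1)]; linarith [hx.2, ht.2])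
    calc _ ≤ ε * M * (t - a) :=
          abs_byPartsIntegral_sub_sub_le hderiv hf'cont hM hg ha ht.1 (ht.2.trans hfit) hosc
      _ ≤ 2 * K * τ := by nlinarith [mul_le_mul_of_nonneg_right hεM (sub_nonneg.mpr ht.1), ht.2]
  have hcolumn : ∀ j < K, ∀ c ∈ Icc (1 : ℝ) 2,
      a + (2 * j + c) * τ ∈ Icc a (a + 2 * K * τ) ∧ 1 ≤ f (a + (2 * j + c) * τ) := by
    intro j hj c hc
    have : (j : ℝ) + 1 ≤ K := by exact_mod_cast hj
    have hwin : a + (2 * j + c) * τ ∈ Icc a (a + 2 * K * τ) :=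
      ⟨by nlinarith [hc.1], by nlinarith [hc.2]⟩
    exact ⟨hwin, hf1 _ ⟨ha.trans hwin.1, hwin.2.trans hfit⟩⟩
  constructor
  · intro j hj
    obtain ⟨hwin, hf⟩ := hcolumn j hj 1 ⟨le_rfl, one_le_two⟩
    have hΔ := (hzig.excursions hτ hj).1
    have herr' := (abs_le.mp (herr _ hwin)).2
    nlinarith [Real.sqrt_nonneg τ]
  · intro j hj
    obtain ⟨hwin, hf⟩ := hcolumn j hj 2 ⟨one_le_two, le_rfl⟩
    have hΔ := (hzig.excursions hτ hj).2
    have herr' := (abs_le.mp (herr _ hwin)).1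
    nlinarith [Real.sqrt_nonneg τ]

theorem smallestCoverExceeds_of_isZigzagWindow {E : Set (EuclideanSpace ℝ (Fin 2))}
    (hE : ∀ t ∈ Icc (0 : ℝ) 1, !₂[t, byPartsIntegral f f' g t] ∈ E) {m : ℝ} (hm : m < K ^ 2) :
    smallestCoverExceeds (closedBall !₂[a, byPartsIntegral f f' g a] (3 * K * τ) ∩ E)
      (τ / 2) m := by
  set β := byPartsIntegral f f' g
  obtain ⟨hdown, hup⟩ := crossings_of_isZigzagWindow hderiv hf'cont hf1 hM hεM hg hunif hτ ha hfit
    hscale hδ hzig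
  have hsub : Icc a (a + 2 * K * τ) ⊆ Icc 0 1 := Icc_subset_Icc ha hfit
  obtain ⟨t, ht⟩ := exists_grid_of_crossings hτ.le
    ((continuousOn_byPartsIntegral hderiv hf'cont hg).mono hsub) hdown hup
  have htwin : ∀ q, t q ∈ Icc a (a + 2 * K * τ) := by
    intro q
    have : (q.1 : ℝ) + 1 ≤ K := by exact_mod_cast q.1.isLt
    exact ⟨by nlinarith [(ht q).1.1], by nlinarith [(ht q).1.2]⟩
  have hball : ∀ q, dist !₂[t q, β (t q)] !₂[a, β a] ≤ 3 * K * τ := by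
    intro q
    have : (q.2 : ℝ) + 1 ≤ K := by exact_mod_cast q.2.isLt
    refine (EuclideanSpace.dist_pair_le_abs_add_abs _ _ _ _).trans ?_
    rw [show β (t q) = β a + q.2 * τ from (ht q).2, add_sub_cancel_left,
      abs_of_nonneg (sub_nonneg.mpr (htwin q).1), abs_of_nonneg (by positivity)]
    nlinarith [(htwin q).2]
  refine smallestCoverExceeds_of_pairwise_lt_dist (by positivity) (fun q ↦ !₂[t q, β (t q)])
    (fun q ↦ ⟨hball q, hE _ (hsub (htwin q))⟩) (fun q q' hqq' ↦ (half_lt_self hτ).trans_le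
      (pairwise_le_dist_of_grid hτ.le t (fun q ↦ (ht q).1) (fun q ↦ (ht q).2) hqq')) ?_
  simpa [sq] using hm

end ZigzagWindow

/-- Currying turns the joint law of the `X (i, j)`, a product measure, into a product over `i` of
the laws of the blocks `(X (i, j))_j`, and the event is a box in these blocks. -/
theorem ProbabilityTheory.iIndepFun.measure_forall_exists_notMem {Ω β ι κ : Type*}
    [MeasurableSpace Ω] [MeasurableSpace β] [Fintype ι] [Fintype κ] {P : Measure Ω}
    [IsProbabilityMeasure P] {ν : Measure β} [IsProbabilityMeasure ν] {X : ι × κ → Ω → β}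
    (hX : iIndepFun X P) (hXm : ∀ p, AEMeasurable (X p) P) (hlaw : ∀ p, P.map (X p) = ν)
    {s : κ → Set β} (hs : ∀ j, MeasurableSet (s j)) :
    P {ω | ∀ i, ∃ j, X (i, j) ω ∉ s j} = (1 - ∏ j, ν (s j)) ^ Fintype.card ι := by
  have hjoint : P.map (fun ω p ↦ X p ω) = Measure.infinitePi fun _ : ι × κ ↦ ν := by
    rw [(iIndepFun_iff_map_fun_eq_pi_map hXm).mp hX, Measure.infinitePi_eq_pi]
    simp_rw [hlaw]
  have hT : MeasurableSet (univ.pi fun _ : ι ↦ (univ.pi s)ᶜ) :=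
    .univ_pi fun _ ↦ (MeasurableSet.univ_pi hs).compl
  have hset : {ω | ∀ i, ∃ j, X (i, j) ω ∉ s j}
      = (fun ω p ↦ X p ω) ⁻¹' (MeasurableEquiv.curry ι κ β ⁻¹' univ.pi fun _ ↦ (univ.pi s)ᶜ) := by
    ext ω
    simp [MeasurableEquiv.coe_curry]
  rw [hset, ← Measure.map_apply_of_aemeasurable (aemeasurable_pi_lambda _ hXm)
    ((MeasurableEquiv.curry ι κ β).measurable hT), hjoint,
    ← Measure.map_apply (MeasurableEquiv.curry ι κ β).measurable hT,
    Measure.infinitePi_map_curry (fun _ _ ↦ ν), Measure.infinitePi_eq_pi, Measure.pi_pi]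
  simp_rw [Measure.infinitePi_eq_pi, prob_compl_eq_one_sub (MeasurableSet.univ_pi hs),
    Measure.pi_pi]
  simp

namespace IsWienerProcess

variable {Ω : Type*} [MeasurableSpace Ω] {P : Measure Ω} {W : ℝ → Ω → ℝ}

theorem aemeasurable_sub (hW : IsWienerProcess P W) {t h : ℝ} (ht : 0 ≤ t) (hh : 0 ≤ h) :
    AEMeasurable (fun ω ↦ W (t + h) ω - W t ω) P :=
  .of_map_ne_zero <| by rw [hW.2.2.1 t h ht hh]; exact IsProbabilityMeasure.ne_zero _

theorem map_sub_div_sqrt (hW : IsWienerProcess P W) {t h : ℝ} (ht : 0 ≤ t) (hh : 0 < h) :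
    P.map (fun ω ↦ (W (t + h) ω - W t ω) / √h) = gaussianReal 0 1 := by
  have hcomp : (fun ω ↦ (W (t + h) ω - W t ω) / √h)
      = (· / √h) ∘ fun ω ↦ W (t + h) ω - W t ω := rfl
  rw [hcomp, ← AEMeasurable.map_map_of_aemeasurable (g := (· / √h))
    (measurable_div_const _).aemeasurable (hW.aemeasurable_sub ht hh.le), hW.2.2.1 t h ht hh.le,
    gaussianReal_map_div_const]
  congr 1
  · simp
  · ext
    simp [Real.sq_sqrt hh.le, hh.le, hh.ne']

theorem iIndepFun_increments_div_sqrt (hW : IsWienerProcess P W) {τ : ℝ} (hτ : 0 < τ) (n m : ℕ) :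
    iIndepFun (fun (p : Fin n × Fin m) ω ↦
      (W (m * p.1 * τ + p.2 * τ + τ) ω - W (m * p.1 * τ + p.2 * τ) ω) / √τ) P := by
  have hmono : StrictMono fun l : Fin (n * m + 1) ↦ (l : ℝ) * τ := fun l l' h ↦
    mul_lt_mul_of_pos_right (by exact_mod_cast h) hτ
  convert ((hW.2.1 _ _ (by simp) hmono).comp (fun _ x ↦ x / √τ)
    (fun _ ↦ measurable_id.div_const _)).precomp (finProdFinEquiv (m := n) (n := m)).injective
    using 3 with p ω
  simp only [Function.comp_apply, finProdFinEquiv_apply_val, Fin.val_succ, Fin.val_castSucc]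
  push_cast
  ring_nf

variable [IsProbabilityMeasure P]

theorem measure_forall_not_isZigzagWindow (hW : IsWienerProcess P W) {τ : ℝ} (hτ : 0 < τ)
    (K n : ℕ) :
    P {ω | ∀ i < n, ¬ IsZigzagWindow (W · ω) K τ (2 * K * i * τ)}
      = (1 - ∏ j : Fin (2 * K), gaussianReal 0 1 (zigzagTarget j)) ^ n := by
  have hnonneg : ∀ p : Fin n × Fin (2 * K), 0 ≤ (2 * K : ℕ) * (p.1 : ℝ) * τ + p.2 * τ :=
    fun p ↦ by positivity
  convert (hW.iIndepFun_increments_div_sqrt hτ n (2 * K)).measure_forall_exists_notMem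
    (fun p ↦ (hW.aemeasurable_sub (hnonneg p) hτ.le).div_const _)
    (fun p ↦ hW.map_sub_div_sqrt (hnonneg p) hτ) (fun j ↦ measurableSet_zigzagTarget j) using 2
  · ext ω
    simp only [IsZigzagWindow, mem_ofPred_eq, not_forall, Fin.forall_iff, Fin.exists_iff]
    push_cast
    rfl
  · simp

theorem ae_eventually_exists_isZigzagWindow (hW : IsWienerProcess P W) (K : ℕ) {τ : ℕ → ℝ}
    (hτ : ∀ n, 0 < τ n) :
    ∀ᵐ ω ∂P, ∀ᶠ n in atTop, ∃ i < n, IsZigzagWindow (W · ω) K (τ n) (2 * K * i * τ n) := by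
  have hq0 : ∏ j : Fin (2 * K), gaussianReal 0 1 (zigzagTarget j) ≠ 0 :=
    Finset.prod_ne_zero_iff.mpr fun j _ ↦ (gaussianReal_zigzagTarget_pos j).ne'
  have hq1 : ∏ j : Fin (2 * K), gaussianReal 0 1 (zigzagTarget j) ≤ 1 :=
    Finset.prod_le_one' fun j _ ↦ prob_le_one
  have hsum :
      ∑' n, P {ω | ∀ i < n, ¬ IsZigzagWindow (W · ω) K (τ n) (2 * K * i * τ n)} ≠ ⊤ := by
    rw [tsum_congr fun n ↦ hW.measure_forall_not_isZigzagWindow (hτ n) K n,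
      ENNReal.tsum_geometric, ENNReal.sub_sub_cancel ENNReal.one_ne_top hq1]
    exact ENNReal.inv_ne_top.mpr hq0
  filter_upwards [ae_eventually_notMem hsum] with ω hω
  simpa using hω

end IsWienerProcess

/-- Small enough that `9 K² τ ≤ 1`, i.e. `3Kτ ≤ √τ`, and that `n` windows of `2K` steps of
length `τ` fit into `[0, 1]`; the shifts `K + 1`, `n + 1` keep it away from `0⁻¹ = 0`. -/
noncomputable def zigzagScale (K n : ℕ) : ℝ := (9 * ((K : ℝ) + 1) ^ 2 * (n + 1))⁻¹

theorem zigzagScale_pos (K n : ℕ) : 0 < zigzagScale K n := by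
  unfold zigzagScale
  positivity

theorem tendsto_zigzagScale (K : ℕ) : Tendsto (zigzagScale K) atTop (nhds 0) := by
  refine tendsto_inv_atTop_zero.comp (Tendsto.const_mul_atTop (by positivity) ?_)
  exact tendsto_atTop_add_const_right _ 1 tendsto_natCast_atTop_atTop

theorem zigzagScale_le (K : ℕ) {i n : ℕ} (hi : i < n) :
    2 * K * i * zigzagScale K n + 2 * K * zigzagScale K n ≤ 1 ∧
      9 * K ^ 2 * zigzagScale K n ≤ 1 := by
  have hi' : (i : ℝ) + 1 ≤ n := by exact_mod_cast hi
  have hτ : zigzagScale K n * (9 * ((K : ℝ) + 1) ^ 2 * (n + 1)) = 1 :=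
    inv_mul_cancel₀ (by positivity)
  have hτ0 := zigzagScale_pos K n
  have hwindows : 2 * K * ((i : ℝ) + 1) ≤ 9 * ((K : ℝ) + 1) ^ 2 * (n + 1) := by
    have hK : 2 * (K : ℝ) ≤ 9 * ((K : ℝ) + 1) ^ 2 := by nlinarith
    nlinarith [mul_le_mul_of_nonneg_left hi' (by positivity : (0 : ℝ) ≤ 2 * K),
      mul_le_mul_of_nonneg_right hK (by positivity : (0 : ℝ) ≤ n + 1)]
  have hsq : 9 * (K : ℝ) ^ 2 ≤ 9 * ((K : ℝ) + 1) ^ 2 * (n + 1) := by nlinarith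
  constructor
  · nlinarith [mul_le_mul_of_nonneg_left hwindows hτ0.le]
  · nlinarith [mul_le_mul_of_nonneg_left hsq hτ0.le]

/-- Let `f : [0,1] → ℝ` be `C¹` with `f ≥ 1` and let
`B_f(t) = f(t) W(t) - ∫₀ᵗ W(x) f'(x) dx` (the Itô integral `∫₀ᵗ f dW` after integration
by parts). Then the graph of `B_f` over `[0,1]` almost surely has Assouad dimension `2`:
for every `s < 2` it is not `s`-homogeneous. -/
theorem assouad_stochastic_integral_graph {Ω : Type*} [MeasurableSpace Ω]
    (P : Measure Ω) [IsProbabilityMeasure P]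
    (W : ℝ → Ω → ℝ) (hW : IsWienerProcess P W)
    (f f' : ℝ → ℝ)
    (hderiv : ∀ x ∈ Icc (0 : ℝ) 1, HasDerivWithinAt f (f' x) (Icc (0 : ℝ) 1) x)
    (hf'cont : ContinuousOn f' (Icc (0 : ℝ) 1))
    (hf1 : ∀ x ∈ Icc (0 : ℝ) 1, 1 ≤ f x)
    (B : ℝ → Ω → ℝ)
    (hB : ∀ t ∈ Icc (0 : ℝ) 1, ∀ ω,
      B t ω = f t * W t ω - ∫ x in (0 : ℝ)..t, W x ω * f' x)
    (G : Ω → Set (EuclideanSpace ℝ (Fin 2)))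
    (hG : ∀ ω, G ω = {p | ∃ t ∈ Icc (0 : ℝ) 1, p 0 = t ∧ p 1 = B t ω}) :
    ∀ᵐ ω ∂P, ∀ s < (2 : ℝ), ∀ C > (0 : ℝ), ∃ x ∈ G ω, ∃ R r : ℝ, 0 < r ∧ r ≤ R ∧
      smallestCoverExceeds (closedBall x R ∩ G ω) r (C * (R / r) ^ s) := by
  obtain ⟨M, hM⟩ := isCompact_Icc.exists_bound_of_continuousOn hf'cont
  have hM0 : 0 ≤ M := (norm_nonneg _).trans (hM 0 ⟨le_rfl, zero_le_one⟩)
  filter_upwards [hW.2.2.2, ae_all_iff.2 fun K ↦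
    hW.ae_eventually_exists_isZigzagWindow K (zigzagScale_pos K)] with ω hcont hzig
  intro s hs C _
  obtain ⟨K, hKC, hK⟩ := ((eventually_mul_mul_rpow_lt_sq C (by norm_num : (0 : ℝ) ≤ 6) hs).and
    (eventually_gt_atTop 0)).exists
  obtain ⟨δ, hδ, hunif⟩ := uniformContinuousOn_iff_le.mp
    (isCompact_Icc.uniformContinuousOn_of_continuous hcont.continuousOn) (M + 1)⁻¹ (by positivity)
  obtain ⟨n, ⟨i, hi, hzigK⟩, hnδ⟩ := ((hzig K).and <| ((tendsto_zigzagScale K).const_mul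
    (2 * (K : ℝ))).eventually (ge_mem_nhds (by simpa using hδ))).exists
  obtain ⟨hfit, hscale⟩ := zigzagScale_le K hi
  have hτ := zigzagScale_pos K n
  set τ := zigzagScale K n
  have hK1 : (1 : ℝ) ≤ K := by exact_mod_cast hK
  have ha1 : 2 * K * i * τ ≤ 1 := by nlinarith
  have hgraph : ∀ t ∈ Icc (0 : ℝ) 1, !₂[t, byPartsIntegral f f' (W · ω) t] ∈ G ω := fun t ht ↦ by
    rw [hG]
    exact ⟨t, ht, by simp, by simp [hB t ht, byPartsIntegral]⟩
  refine ⟨_, hgraph (2 * K * i * τ) ⟨by positivity, ha1⟩, 3 * K * τ, τ / 2, by positivity,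
    by nlinarith, ?_⟩
  rw [show 3 * K * τ / (τ / 2) = 6 * K by field_simp; ring]
  exact smallestCoverExceeds_of_isZigzagWindow hderiv hf'cont hf1 hM
    (by rw [inv_mul_le_iff₀ (by positivity)]; linarith) hcont hunif hτ (by positivity) hfit hscale
    hnδ hzigK hgraph hKC
end

section
/- Let W = (W(t))_{t ≥ 0} be a standard Wiener process. Then almost surely there exist a sequence of pairwise disjoint closed intervals I_i = [a_i, a_i + |I_i|] ⊆ [0,1] and a sequence of positive integers n_i with n_i → ∞ such that for every i and every k ∈ {0, 1, ..., n_i − 1} one has (−1)^k · ( W(a_i + (k+1)|I_i|/n_i) − W(a_i + k·|I_i|/n_i) ) ≥ |I_i|^{1/2}; that is, over each interval I_i the increments of W along the n_i equal subintervals alternate in sign (positive for even k, negative for odd k) and each has absolute value at least |I_i|^{1/2}. -/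
open MeasureTheory ProbabilityTheory Metric Set Filter

/-!
Fix `N ≥ 1` and cut `[2⁻¹ ^ N, 2⁻¹ ^ (N - 1))` into infinitely many adjacent intervals, each
subdivided into `N` equal steps. Normalised by their standard deviations, the Brownian increments
along all these steps are i.i.d. standard Gaussians, so by Brownian scaling the events "`W` zigzags
with steps of size `≥ √(length)` on the `m`-th interval" are independent and have one and the
same positive probability. By the second Borel–Cantelli lemma one of them occurs almost surely. The
dyadic ranges for different `N` are disjoint, which gives the intervals `Iᵢ` with `nᵢ = i + 1`.
-/

section Blocks

variable {Ω β : Type*} [MeasurableSpace Ω] [MeasurableSpace β] {P : Measure Ω} {μ : Measure β}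
  {Z : ℕ → Ω → β} {N : ℕ} [NeZero N] {B : Fin N → Set β}

theorem ae_exists_block_mem_of_measurable (hZ : iIndepFun Z P) (hmeas : ∀ j, Measurable (Z j))
    (hdist : ∀ j, P.map (Z j) = μ) (hB : ∀ r, MeasurableSet (B r))
    (hpos : ∀ r, μ (B r) ≠ 0) :
    ∀ᵐ ω ∂P, ∃ m, ∀ r : Fin N, Z (m * N + r) ω ∈ B r := by
  have := hZ.isProbabilityMeasure
  set E : ℕ → Set Ω := fun m => ⋂ r : Fin N, Z (m * N + r) ⁻¹' B r
  have hE_meas : ∀ m, MeasurableSet (E m) := fun m => .iInter fun r => hmeas _ (hB r)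
  have hblocks : iIndepFun (fun p : ℕ × Fin N => Z (p.1 * N + p.2)) P :=
    hZ.precomp (Nat.divModEquiv N).symm.injective
  have hE_inter : ∀ F : Finset ℕ, P (⋂ m ∈ F, E m) = ∏ _m ∈ F, ∏ r, μ (B r) := by
    intro F
    have hsets : (⋂ m ∈ F, E m) =
        ⋂ p ∈ F ×ˢ (Finset.univ : Finset (Fin N)), Z (p.1 * N + p.2) ⁻¹' B p.2 := by
      ext ω
      simp only [E, mem_iInter, Finset.mem_product, Finset.mem_univ, and_true, mem_preimage]
      exact ⟨fun h p hp => h p.1 hp p.2, fun h m hm r => h (m, r) hm⟩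
    rw [hsets, hblocks.meas_biInter fun p _ => ⟨B p.2, hB p.2, rfl⟩, Finset.prod_product]
    refine Finset.prod_congr rfl fun m _ => Finset.prod_congr rfl fun r _ => ?_
    rw [← hdist (m * N + r), Measure.map_apply (hmeas _) (hB r)]
  have hE_prob : ∀ m, P (E m) = ∏ r, μ (B r) := fun m => by
    simpa using hE_inter {m}
  have hE_indep : iIndepSet E P := by
    rw [iIndepSet_iff_meas_biInter hE_meas]
    intro F
    simp only [hE_inter, hE_prob]
  have hsum : ∑' m, P (E m) = ⊤ := by
    simp only [hE_prob]
    exact ENNReal.tsum_const_eq_top_of_ne_zero (Finset.prod_ne_zero_iff.2 fun r _ => hpos r)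
  have hunion : P (⋃ m, E m) = 1 := by
    refine le_antisymm prob_le_one ?_
    calc 1 = P (limsup E atTop) := (measure_limsup_eq_one hE_meas hE_indep hsum).symm
      _ ≤ P (⋃ m, E m) := measure_mono fun ω hω =>
        mem_iUnion.2 (mem_limsup_iff_frequently_mem.1 hω).exists
  filter_upwards [(ae_mem_iff_measure_eq (MeasurableSet.iUnion hE_meas).nullMeasurableSet).2
    (hunion.trans measure_univ.symm)] with ω hω
  simpa [E] using hω

theorem ae_exists_block_mem (hZ : iIndepFun Z P) (hmeas : ∀ j, AEMeasurable (Z j) P)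
    (hdist : ∀ j, P.map (Z j) = μ) (hB : ∀ r, MeasurableSet (B r))
    (hpos : ∀ r, μ (B r) ≠ 0) :
    ∀ᵐ ω ∂P, ∃ m, ∀ r : Fin N, Z (m * N + r) ω ∈ B r := by
  have hZ' : iIndepFun (fun j => (hmeas j).mk) P :=
    (iIndepFun_congr fun j => (hmeas j).ae_eq_mk).1 hZ
  have hdist' : ∀ j, P.map (hmeas j).mk = μ := fun j =>
    (Measure.map_congr (hmeas j).ae_eq_mk).symm.trans (hdist j)
  filter_upwards [ae_exists_block_mem_of_measurable hZ' (fun j => (hmeas j).measurable_mk)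
    hdist' hB hpos, ae_all_iff.2 fun j => (hmeas j).ae_eq_mk] with ω hω hmk
  simpa only [hmk] using hω

end Blocks

namespace IsWienerProcess

variable {Ω : Type*} [MeasurableSpace Ω] {P : Measure Ω} {W : ℝ → Ω → ℝ}

theorem map_increment (hW : IsWienerProcess P W) {s t : ℝ} (hs : 0 ≤ s) (hst : s ≤ t) :
    P.map (fun ω => W t ω - W s ω) = gaussianReal 0 (t - s).toNNReal := by
  simpa using hW.2.2.1 s (t - s) hs (sub_nonneg.2 hst)

theorem aemeasurable_increment (hW : IsWienerProcess P W) {s t : ℝ} (hs : 0 ≤ s)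
    (hst : s ≤ t) : AEMeasurable (fun ω => W t ω - W s ω) P :=
  aemeasurable_of_map_neZero (by rw [hW.map_increment hs hst]; infer_instance)

theorem map_increment_div_sqrt (hW : IsWienerProcess P W) {s t : ℝ} (hs : 0 ≤ s)
    (hst : s < t) : P.map (fun ω => (W t ω - W s ω) / √(t - s)) = gaussianReal 0 1 := by
  have hvar : 0 < t - s := sub_pos.2 hst
  change P.map ((· / √(t - s)) ∘ fun ω => W t ω - W s ω) = _
  rw [← AEMeasurable.map_map_of_aemeasurable (measurable_div_const _).aemeasurable
    (hW.aemeasurable_increment hs hst.le), hW.map_increment hs hst.le, gaussianReal_map_div_const]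
  congr 1
  · simp
  · ext
    simp [Real.sq_sqrt hvar.le, hvar.le, hvar.ne']

theorem iIndepFun_increments (hW : IsWienerProcess P W) {t : ℕ → ℝ} (ht0 : 0 ≤ t 0)
    (ht : StrictMono t) : iIndepFun (fun j ω => W (t (j + 1)) ω - W (t j) ω) P := by
  refine iIndepFun_iff_finset.2 fun S => ?_
  obtain ⟨M, hM⟩ := S.exists_nat_subset_range
  exact (hW.2.1 M (fun j => t j) ht0 (ht.comp Fin.val_strictMono)).precomp
    (g := fun j : S => ⟨j, Finset.mem_range.1 (hM j.2)⟩)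
    fun i j h => Subtype.ext (congrArg Fin.val h)

end IsWienerProcess

theorem gaussianReal_setOf_le_mul_ne_zero (c : ℝ) {a : ℝ} (ha : a ≠ 0) :
    gaussianReal 0 1 {x | c ≤ a * x} ≠ 0 := by
  intro h
  have hvol := gaussianReal_absolutelyContinuous' 0 one_ne_zero h
  rw [show {x : ℝ | c ≤ a * x} = (a * ·) ⁻¹' Ici c from rfl,
    Real.volume_preimage_mul_left ha, Real.volume_Ici] at hvol
  simp [ha] at hvol

/-- The points of `s`, with each gap `[s m, s (m + 1)]` subdivided into `N` equal steps. -/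
noncomputable def refinedGrid (s : ℕ → ℝ) (N j : ℕ) : ℝ :=
  s (j / N) + (j % N : ℕ) * ((s (j / N + 1) - s (j / N)) / N)

theorem refinedGrid_zero (s : ℕ → ℝ) (N : ℕ) : refinedGrid s N 0 = s 0 := by
  simp [refinedGrid]

section refinedGrid

variable {s : ℕ → ℝ} {N : ℕ} [NeZero N]

theorem refinedGrid_mul_add_of_lt (m : ℕ) {r : ℕ} (hr : r < N) :
    refinedGrid s N (m * N + r) = s m + r * ((s (m + 1) - s m) / N) := by
  have hdiv : (m * N + r) / N = m := by
    rw [add_comm, Nat.add_mul_div_right _ _ (Nat.pos_of_neZero N), Nat.div_eq_of_lt hr, zero_add]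
  have hmod : (m * N + r) % N = r := by
    rw [add_comm, Nat.add_mul_mod_self_right, Nat.mod_eq_of_lt hr]
  rw [refinedGrid, hdiv, hmod]

theorem refinedGrid_mul_add (m : ℕ) {r : ℕ} (hr : r ≤ N) :
    refinedGrid s N (m * N + r) = s m + r * ((s (m + 1) - s m) / N) := by
  rcases hr.lt_or_eq with hr | hr
  · exact refinedGrid_mul_add_of_lt m hr
  · rw [hr, show m * N + N = (m + 1) * N + 0 by ring,
      refinedGrid_mul_add_of_lt (m + 1) (Nat.pos_of_neZero N)]
    have hN : (N : ℝ) ≠ 0 := Nat.cast_ne_zero.2 (NeZero.ne N)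
    field_simp
    ring

theorem refinedGrid_strictMono (hs : StrictMono s) : StrictMono (refinedGrid s N) := by
  refine strictMono_nat_of_lt_succ fun j => ?_
  have hr : j % N < N := Nat.mod_lt j (Nat.pos_of_neZero N)
  have hstep : 0 < (s (j / N + 1) - s (j / N)) / N :=
    div_pos (sub_pos.2 (hs (j / N).lt_succ_self)) (Nat.cast_pos.2 (Nat.pos_of_neZero N))
  rw [← Nat.div_add_mod' j N, add_assoc, refinedGrid_mul_add _ hr.le, refinedGrid_mul_add _ hr]
  push_cast
  linarith

end refinedGrid

theorem IsWienerProcess.ae_exists_zigzag {Ω : Type*} [MeasurableSpace Ω] {P : Measure Ω}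
    {W : ℝ → Ω → ℝ} (hW : IsWienerProcess P W) {s : ℕ → ℝ}
    (hs0 : 0 ≤ s 0) (hs : StrictMono s) (N : ℕ) [NeZero N] :
    ∀ᵐ ω ∂P, ∃ m, ∀ k < N, √(s (m + 1) - s m) ≤ (-1 : ℝ) ^ k *
      (W (s m + ((k : ℝ) + 1) * ((s (m + 1) - s m) / N)) ω
        - W (s m + (k : ℝ) * ((s (m + 1) - s m) / N)) ω) := by
  set t := refinedGrid s N
  have ht : StrictMono t := refinedGrid_strictMono hs
  have ht0 : 0 ≤ t 0 := hs0.trans (refinedGrid_zero s N).ge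
  set Z : ℕ → Ω → ℝ := fun j ω => (W (t (j + 1)) ω - W (t j) ω) / √(t (j + 1) - t j)
  have hZ : iIndepFun Z P := (hW.iIndepFun_increments ht0 ht).comp
    (fun j x => x / √(t (j + 1) - t j)) fun j => measurable_div_const _
  have hZdist : ∀ j, P.map (Z j) = gaussianReal 0 1 := fun j =>
    hW.map_increment_div_sqrt (ht0.trans (ht.monotone j.zero_le)) (ht j.lt_succ_self)
  have hZmeas : ∀ j, AEMeasurable (Z j) P := fun j =>
    aemeasurable_of_map_neZero (by rw [hZdist j]; infer_instance)
  filter_upwards [ae_exists_block_mem hZ hZmeas hZdist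
    (B := fun r : Fin N => {x | √N ≤ (-1 : ℝ) ^ (r : ℕ) * x})
    (fun r => measurableSet_le measurable_const (measurable_const.mul measurable_id))
    (fun r => gaussianReal_setOf_le_mul_ne_zero _ (pow_ne_zero _ (by norm_num)))]
    with ω ⟨m, hm⟩
  refine ⟨m, fun k hk => ?_⟩
  set δ := (s (m + 1) - s m) / N
  have hδ : 0 < δ :=
    div_pos (sub_pos.2 (hs m.lt_succ_self)) (Nat.cast_pos.2 (Nat.pos_of_neZero N))
  have hzk := hm ⟨k, hk⟩
  simp only [Z, t, add_assoc, refinedGrid_mul_add m hk.le,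
    refinedGrid_mul_add m (Nat.succ_le_of_lt hk)] at hzk
  push_cast at hzk
  rw [show s m + (k + 1) * δ - (s m + k * δ) = δ by ring, mul_div_assoc',
    le_div_iff₀ (Real.sqrt_pos.2 hδ), ← Real.sqrt_mul (Nat.cast_nonneg N),
    mul_div_cancel₀ _ (Nat.cast_ne_zero.2 (NeZero.ne N))] at hzk
  exact hzk

theorem pairwise_disjoint_Icc_of_lt {α : Type*} [LinearOrder α] {a b : ℕ → α}
    (h : ∀ i j, i < j → b j < a i) :
    Pairwise fun i j => Disjoint (Icc (a i) (b i)) (Icc (a j) (b j)) := by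
  intro i j hij
  rcases hij.lt_or_gt with hij | hij
  · exact Set.disjoint_left.2 fun x hxi hxj => (h i j hij).not_ge (hxi.1.trans hxj.2)
  · exact Set.disjoint_left.2 fun x hxi hxj => (h j i hij).not_ge (hxj.1.trans hxi.2)

noncomputable def geometricTimes (i m : ℕ) : ℝ := 2⁻¹ ^ (i + 1) * (2 - 2⁻¹ ^ m)

theorem geometricTimes_strictMono (i : ℕ) : StrictMono (geometricTimes i) :=
  strictMono_nat_of_lt_succ fun m => mul_lt_mul_of_pos_left
    (sub_lt_sub_left (pow_lt_pow_right_of_lt_one₀ (by norm_num) (by norm_num) m.lt_succ_self) 2)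
    (by positivity)

theorem pow_succ_le_geometricTimes (i m : ℕ) : (2⁻¹ : ℝ) ^ (i + 1) ≤ geometricTimes i m := by
  have hle : (2⁻¹ : ℝ) ^ m ≤ 1 := pow_le_one₀ (by norm_num) (by norm_num)
  exact le_mul_of_one_le_right (by positivity) (by linarith)

theorem geometricTimes_lt_pow (i m : ℕ) : geometricTimes i m < (2⁻¹ : ℝ) ^ i := by
  have hpos : (0 : ℝ) < 2⁻¹ ^ m := by positivity
  calc geometricTimes i m < 2⁻¹ ^ (i + 1) * 2 :=
        mul_lt_mul_of_pos_left (by linarith) (by positivity)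
    _ = 2⁻¹ ^ i := by rw [pow_succ, mul_assoc]; norm_num

theorem brownian_zigzag_intervals_general {Ω : Type*} [MeasurableSpace Ω]
    (P : Measure Ω)
    (W : ℝ → Ω → ℝ) (hW : IsWienerProcess P W) :
    ∀ᵐ ω ∂P, ∃ (a L : ℕ → ℝ) (n : ℕ → ℕ),
      (∀ i, 0 < L i) ∧
      (∀ i, Icc (a i) (a i + L i) ⊆ Icc (0 : ℝ) 1) ∧
      (Pairwise fun i j => Disjoint (Icc (a i) (a i + L i)) (Icc (a j) (a j + L j))) ∧
      (∀ i, 0 < n i) ∧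
      Tendsto n atTop atTop ∧
      (∀ i, ∀ k < n i,
        Real.sqrt (L i) ≤ (-1 : ℝ) ^ k *
          (W (a i + ((k : ℝ) + 1) * (L i / n i)) ω - W (a i + (k : ℝ) * (L i / n i)) ω)) := by
  have hnonneg : ∀ i j, 0 ≤ geometricTimes i j := fun i j =>
    (pow_succ_le_geometricTimes i j).trans' (by positivity)
  have hzigzag := fun i =>
    hW.ae_exists_zigzag (hnonneg i 0) (geometricTimes_strictMono i) (i + 1)
  filter_upwards [ae_all_iff.2 hzigzag] with ω hω
  choose m hm using hω
  have hle_one : ∀ i j, geometricTimes i j ≤ 1 := fun i j =>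
    (geometricTimes_lt_pow i j).le.trans (pow_le_one₀ (by norm_num) (by norm_num))
  refine ⟨fun i => geometricTimes i (m i),
    fun i => geometricTimes i (m i + 1) - geometricTimes i (m i), fun i => i + 1,
    fun i => sub_pos.2 (geometricTimes_strictMono i (m i).lt_succ_self),
    fun i => ?_, ?_, fun i => i.succ_pos, tendsto_add_atTop_nat 1, hm⟩
  · rw [add_sub_cancel]
    exact Icc_subset_Icc (hnonneg _ _) (hle_one _ _)
  · refine pairwise_disjoint_Icc_of_lt fun i j hij => ?_
    rw [add_sub_cancel]
    calc geometricTimes j (m j + 1) < 2⁻¹ ^ j := geometricTimes_lt_pow _ _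
      _ ≤ 2⁻¹ ^ (i + 1) := pow_le_pow_of_le_one (by norm_num) (by norm_num) hij
      _ ≤ geometricTimes i (m i) := pow_succ_le_geometricTimes _ _

/-- Almost surely there are pairwise disjoint intervals `Iᵢ = [aᵢ, aᵢ + Lᵢ] ⊆ [0,1]` and
integers `nᵢ → ∞` such that along the `nᵢ` equal subintervals of `Iᵢ` the increments of `W`
alternate in sign and each has absolute value at least `Lᵢ^{1/2}`. -/
theorem brownian_zigzag_intervals {Ω : Type*} [MeasurableSpace Ω]
    (P : Measure Ω) [IsProbabilityMeasure P]
    (W : ℝ → Ω → ℝ) (hW : IsWienerProcess P W) :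
    ∀ᵐ ω ∂P, ∃ (a L : ℕ → ℝ) (n : ℕ → ℕ),
      (∀ i, 0 < L i) ∧
      (∀ i, Icc (a i) (a i + L i) ⊆ Icc (0 : ℝ) 1) ∧
      (Pairwise fun i j => Disjoint (Icc (a i) (a i + L i)) (Icc (a j) (a j + L j))) ∧
      (∀ i, 0 < n i) ∧
      Tendsto n atTop atTop ∧
      (∀ i, ∀ k < n i,
        Real.sqrt (L i) ≤ (-1 : ℝ) ^ k *
          (W (a i + ((k : ℝ) + 1) * (L i / n i)) ω - W (a i + (k : ℝ) * (L i / n i)) ω)) :=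
  brownian_zigzag_intervals_general P W hW
end
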